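/- arXiv:0704.3283 — 3 statements merged into one kernel-verified Lean document; each statement's English description precedes it below -/
import Mathlib

section
/- Every matroid complex is vertex-decomposable. -/
set_option synthInstance.maxHeartbeats 1000000
set_option maxHeartbeats 1000000
open MvPolynomial

/-- An abstract simplicial complex on the vertex set `Fin n`. -/
structure SComplex (n : ℕ) where
  faces : Set (Finset (Fin n))
  down_closed : ∀ {F G : Finset (Fin n)}, G ∈ faces → F ⊆ G → F ∈ faces

namespace SComplex

variable {n : ℕ}

/-- The link of a vertex `k`. -/
def link (Δ : SComplex n) (k : Fin n) : SComplex n where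
  faces := {G | k ∉ G ∧ G ∈ Δ.faces ∧ insert k G ∈ Δ.faces}
  down_closed := by
    intro F G hG hFG
    exact ⟨fun h => hG.1 (hFG h), Δ.down_closed hG.2.1 hFG,
      Δ.down_closed hG.2.2 (Finset.insert_subset_insert k hFG)⟩

/-- The deletion of a vertex `k`. -/
def del (Δ : SComplex n) (k : Fin n) : SComplex n where
  faces := {G | G ∈ Δ.faces ∧ k ∉ G}
  down_closed := by
    intro F G hG hFG
    exact ⟨Δ.down_closed hG.1 hFG, fun h => hG.2 (hFG h)⟩

/-- `Δ` is a cone with apex `k`. -/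
def IsCone (Δ : SComplex n) (k : Fin n) : Prop :=
  ∀ F ∈ Δ.faces, insert k F ∈ Δ.faces

def IsFacet (Δ : SComplex n) (G : Finset (Fin n)) : Prop :=
  G ∈ Δ.faces ∧ ∀ H ∈ Δ.faces, G ⊆ H → H = G

/-- A complex is pure if all facets have the same cardinality. -/
def Pure (Δ : SComplex n) : Prop :=
  ∀ G H : Finset (Fin n), Δ.IsFacet G → Δ.IsFacet H → G.card = H.card

/-- One more than the dimension of `Δ`: the largest cardinality of a face. -/
noncomputable def dimSucc (Δ : SComplex n) : ℕ :=
  sSup {d | ∃ F ∈ Δ.faces, F.card = d}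

/-- `Δ` is a (possibly empty) simplex: its faces are all subsets of a fixed set. -/
def IsSimplex (Δ : SComplex n) : Prop :=
  ∃ F : Finset (Fin n), Δ.faces = {G | G ⊆ F}

/-- Restriction of `Δ` to a subset `W` of the vertices. -/
def restriction (Δ : SComplex n) (W : Finset (Fin n)) : SComplex n where
  faces := {F | F ∈ Δ.faces ∧ F ⊆ W}
  down_closed := by
    intro F G hG hFG
    exact ⟨Δ.down_closed hG.1 hFG, hFG.trans hG.2⟩

/-- A matroid complex: every restriction is pure. -/
def IsMatroid (Δ : SComplex n) : Prop :=
  ∀ W : Finset (Fin n), (Δ.restriction W).Pure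

/-- A shifted complex. -/
def IsShifted (Δ : SComplex n) : Prop :=
  ∀ F ∈ Δ.faces, ∀ j ∈ F, ∀ i : Fin n, j < i → i ∉ F →
    insert i (F.erase j) ∈ Δ.faces

/-- Vertex-decomposability of a (pure) simplicial complex. -/
inductive VertexDecomposable : SComplex n → Prop
  | simplex (Δ : SComplex n) : Δ.IsSimplex → VertexDecomposable Δ
  | singleton (Δ : SComplex n) : Δ.faces = {∅} → VertexDecomposable Δ
  | step (Δ : SComplex n) (k : Fin n) :
      (Δ.link k).Pure → (Δ.del k).Pure →
      VertexDecomposable (Δ.link k) → VertexDecomposable (Δ.del k) →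
      Δ.dimSucc = (Δ.del k).dimSucc → Δ.dimSucc = (Δ.link k).dimSucc + 1 →
      VertexDecomposable Δ

/-- The cone over `Δ` with a new apex `Fin.last n`. -/
def coneC (Δ : SComplex n) : SComplex (n + 1) where
  faces := {G | ∃ F ∈ Δ.faces, G ⊆ insert (Fin.last n) (F.image Fin.castSucc)}
  down_closed := by
    rintro F G ⟨F', hF', hsub⟩ hFG
    exact ⟨F', hF', hFG.trans hsub⟩

end SComplex

section Algebra

variable (K : Type*) [Field K] {n : ℕ}

/-- The squarefree monomial `x_F = ∏_{i ∈ F} x_i`. -/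
noncomputable def xF (F : Finset (Fin n)) : MvPolynomial (Fin n) K := ∏ i ∈ F, X i

/-- The Stanley–Reisner ideal of `Δ`. -/
noncomputable def SRIdeal (Δ : SComplex n) : Ideal (MvPolynomial (Fin n) K) :=
  Ideal.span {p | ∃ F : Finset (Fin n), F ∉ Δ.faces ∧ p = xF K F}

/-- The ideal `(x_F : F ⊆ [n] \ {k}, F ∉ Γ)`, i.e. the Stanley–Reisner ideal of the
cone with apex `k` over the subcomplex `Γ`. -/
noncomputable def coneIdeal (Γ : SComplex n) (k : Fin n) : Ideal (MvPolynomial (Fin n) K) :=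
  Ideal.span {p | ∃ F : Finset (Fin n), k ∉ F ∧ F ∉ Γ.faces ∧ p = xF K F}

/-- The depth of `S/I`: the maximal length of a regular sequence on `S/I` consisting of
elements of the irrelevant maximal ideal (elements with zero constant term). -/
noncomputable def quotDepth (I : Ideal (MvPolynomial (Fin n) K)) : ℕ :=
  sSup {d | ∃ rs : List (MvPolynomial (Fin n) K), rs.length = d ∧
    (∀ p ∈ rs, constantCoeff p = 0) ∧
    RingTheory.Sequence.IsRegular (MvPolynomial (Fin n) K ⧸ I)
      (rs.map (Ideal.Quotient.mk I))}

/-- `S/I` is a Cohen–Macaulay ring: its depth equals its Krull dimension. -/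
def IsCMQuot (I : Ideal (MvPolynomial (Fin n) K)) : Prop :=
  (quotDepth K I : WithBot ℕ∞) = ringKrullDim (MvPolynomial (Fin n) K ⧸ I)

/-- The height (codimension) of an ideal. -/
noncomputable def idealHeight (I : Ideal (MvPolynomial (Fin n) K)) : ℕ∞ :=
  ⨅ (P : PrimeSpectrum (MvPolynomial (Fin n) K)) (_ : I ≤ P.asIdeal), Order.height P

/-- `I` is unmixed: all associated primes of `S/I` have the same height, that of `I`. -/
def UnmixedIdeal (I : Ideal (MvPolynomial (Fin n) K)) : Prop :=
  ∀ P ∈ associatedPrimes (MvPolynomial (Fin n) K) (MvPolynomial (Fin n) K ⧸ I),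
    idealHeight K P = idealHeight K I

/-- The simplicial complex `Δ` is Cohen–Macaulay over `K`. -/
def IsCMComplex (Δ : SComplex n) : Prop :=
  IsCMQuot K (SRIdeal K Δ)

/-- Weak vertex-decomposability (over the field `K`). -/
inductive WeaklyVD : SComplex n → Prop
  | singleton (Δ : SComplex n) : Δ.faces = {∅} → WeaklyVD Δ
  | cone (Δ : SComplex n) (k : Fin n) : Δ.Pure → Δ.faces.Nonempty → Δ.IsCone k →
      WeaklyVD (Δ.del k) → WeaklyVD Δ
  | step (Δ : SComplex n) (k : Fin n) : Δ.Pure → Δ.faces.Nonempty →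
      WeaklyVD (Δ.link k) → IsCMComplex K (Δ.del k) →
      (Δ.del k).dimSucc = Δ.dimSucc → WeaklyVD Δ

/-- `Δ` is 2-CM (doubly Cohen–Macaulay) over `K`. -/
def Is2CM (Δ : SComplex n) : Prop :=
  IsCMComplex K Δ ∧ ∀ k : Fin n, {k} ∈ Δ.faces →
    IsCMComplex K (Δ.del k) ∧ (Δ.del k).dimSucc = Δ.dimSucc

end Algebra

/-! Induction on the number of faces. If some vertex `k` misses a facet, the link and the deletion
of `k` are again matroids with fewer faces; purity makes the deletion keep the dimension (the facet
avoiding `k` survives) and the link drop it by one. If every vertex lies in a fixed facet, that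
facet is the whole complex, a simplex. -/

namespace SComplex

variable {n : ℕ} {Δ : SComplex n} {k : Fin n}

@[ext]
theorem ext {Δ₁ Δ₂ : SComplex n} (h : Δ₁.faces = Δ₂.faces) : Δ₁ = Δ₂ := by
  cases Δ₁; cases Δ₂; cases h; rfl

theorem restriction_univ (Δ : SComplex n) : Δ.restriction Finset.univ = Δ := by
  ext G
  simp [restriction]

theorem restriction_restriction (Δ : SComplex n) (V W : Finset (Fin n)) :
    (Δ.restriction V).restriction W = Δ.restriction (V ∩ W) := by
  ext G
  simp only [restriction, Set.mem_ofPred_eq, Finset.subset_inter_iff, and_assoc]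

theorem del_restriction (Δ : SComplex n) (k : Fin n) (W : Finset (Fin n)) :
    (Δ.del k).restriction W = Δ.restriction (W.erase k) := by
  ext G
  simp only [del, restriction, Set.mem_ofPred_eq, Finset.subset_erase]
  tauto

theorem link_restriction (Δ : SComplex n) (k : Fin n) (W : Finset (Fin n)) :
    (Δ.link k).restriction W = (Δ.restriction (insert k W)).link k := by
  ext G
  simp only [link, restriction, Set.mem_ofPred_eq]
  constructor
  · rintro ⟨⟨hkG, hG, hkG'⟩, hGW⟩
    exact ⟨hkG, ⟨hG, hGW.trans (Finset.subset_insert k W)⟩, hkG',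
      Finset.insert_subset_insert k hGW⟩
  · rintro ⟨hkG, ⟨hG, hGW⟩, hkG', -⟩
    exact ⟨⟨hkG, hG, hkG'⟩, fun x hx => (Finset.mem_insert.1 (hGW hx)).resolve_left
      (fun h => hkG (h ▸ hx))⟩

theorem exists_isFacet_superset {F : Finset (Fin n)} (hF : F ∈ Δ.faces) :
    ∃ H, Δ.IsFacet H ∧ F ⊆ H := by
  obtain ⟨H, ⟨hH, hFH⟩, hmax⟩ := Set.Finite.exists_maximalFor Finset.card
    {H | H ∈ Δ.faces ∧ F ⊆ H} (Set.toFinite _) ⟨F, hF, subset_rfl⟩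
  refine ⟨H, ⟨hH, fun H' hH' hHH' => ?_⟩, hFH⟩
  exact (Finset.eq_of_subset_of_card_le hHH'
    (hmax ⟨hH', hFH.trans hHH'⟩ (Finset.card_le_card hHH'))).symm

theorem erase_mem_link {H : Finset (Fin n)} (hH : H ∈ Δ.faces) (hkH : k ∈ H) :
    H.erase k ∈ (Δ.link k).faces :=
  ⟨Finset.notMem_erase k H, Δ.down_closed hH (Finset.erase_subset k H),
    (Finset.insert_erase hkH).symm ▸ hH⟩

theorem IsFacet.insert_of_link {G : Finset (Fin n)} (hG : (Δ.link k).IsFacet G) :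
    Δ.IsFacet (insert k G) := by
  obtain ⟨⟨hkG, -, hkG'⟩, hmax⟩ := hG
  obtain ⟨H, hH, hsub⟩ := exists_isFacet_superset hkG'
  have hkH : k ∈ H := hsub (Finset.mem_insert_self k G)
  have hlink := erase_mem_link hH.1 hkH
  have hGH : G ⊆ H.erase k :=
    Finset.subset_erase.2 ⟨(Finset.subset_insert k G).trans hsub, hkG⟩
  rwa [← hmax _ hlink hGH, Finset.insert_erase hkH]

theorem Pure.link (hp : Δ.Pure) (k : Fin n) : (Δ.link k).Pure := by
  intro G H hG hH
  have hc := hp _ _ hG.insert_of_link hH.insert_of_link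
  rwa [Finset.card_insert_of_notMem hG.1.1, Finset.card_insert_of_notMem hH.1.1,
    Nat.succ_inj] at hc

theorem IsMatroid.pure (h : Δ.IsMatroid) : Δ.Pure :=
  Δ.restriction_univ ▸ h Finset.univ

theorem IsMatroid.restriction (h : Δ.IsMatroid) (V : Finset (Fin n)) :
    (Δ.restriction V).IsMatroid := fun W =>
  (Δ.restriction_restriction V W).symm ▸ h (V ∩ W)

theorem IsMatroid.del (h : Δ.IsMatroid) (k : Fin n) : (Δ.del k).IsMatroid := fun W =>
  (Δ.del_restriction k W).symm ▸ h (W.erase k)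

theorem IsMatroid.link (h : Δ.IsMatroid) (k : Fin n) : (Δ.link k).IsMatroid := fun W =>
  (Δ.link_restriction k W).symm ▸ (h.restriction (insert k W)).pure.link k

theorem Pure.card_le_of_isFacet (hp : Δ.Pure) {H : Finset (Fin n)} (hH : Δ.IsFacet H)
    {F : Finset (Fin n)} (hF : F ∈ Δ.faces) : F.card ≤ H.card := by
  obtain ⟨G, hG, hFG⟩ := exists_isFacet_superset hF
  exact (Finset.card_le_card hFG).trans (hp G H hG hH).le

theorem dimSucc_eq_card_of_forall_card_le {F : Finset (Fin n)} (hF : F ∈ Δ.faces)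
    (hmax : ∀ G ∈ Δ.faces, G.card ≤ F.card) : Δ.dimSucc = F.card := by
  have hub : F.card ∈ upperBounds {d | ∃ G ∈ Δ.faces, G.card = d} := by
    rintro _ ⟨G, hG, rfl⟩
    exact hmax G hG
  exact le_antisymm (csSup_le ⟨_, F, hF, rfl⟩ hub) (le_csSup ⟨_, hub⟩ ⟨F, hF, rfl⟩)

theorem Pure.dimSucc_eq_card (hp : Δ.Pure) {H : Finset (Fin n)} (hH : Δ.IsFacet H) :
    Δ.dimSucc = H.card :=
  dimSucc_eq_card_of_forall_card_le hH.1 fun _ => hp.card_le_of_isFacet hH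

theorem Pure.dimSucc_del (hp : Δ.Pure) {H : Finset (Fin n)} (hH : Δ.IsFacet H) (hkH : k ∉ H) :
    (Δ.del k).dimSucc = Δ.dimSucc := by
  rw [hp.dimSucc_eq_card hH]
  exact dimSucc_eq_card_of_forall_card_le ⟨hH.1, hkH⟩ fun _ hG => hp.card_le_of_isFacet hH hG.1

theorem Pure.dimSucc_link_add_one (hp : Δ.Pure) (hk : {k} ∈ Δ.faces) :
    (Δ.link k).dimSucc + 1 = Δ.dimSucc := by
  obtain ⟨H, hH, hkH⟩ := exists_isFacet_superset hk
  rw [Finset.singleton_subset_iff] at hkH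
  have hlink := erase_mem_link hH.1 hkH
  have hmax : ∀ G ∈ (Δ.link k).faces, G.card ≤ (H.erase k).card := by
    rintro G ⟨hkG, -, hkG'⟩
    have := hp.card_le_of_isFacet hH hkG'
    rw [Finset.card_insert_of_notMem hkG] at this
    rw [Finset.card_erase_of_mem hkH]
    omega
  rw [dimSucc_eq_card_of_forall_card_le hlink hmax, hp.dimSucc_eq_card hH,
    Finset.card_erase_add_one hkH]

theorem isSimplex_of_forall_mem_isFacet {H : Finset (Fin n)} (hH : Δ.IsFacet H)
    (hvert : ∀ k, {k} ∈ Δ.faces → k ∈ H) : Δ.IsSimplex := by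
  refine ⟨H, Set.ext fun G => ⟨fun hG v hv => hvert v ?_, Δ.down_closed hH.1⟩⟩
  exact Δ.down_closed hG (Finset.singleton_subset_iff.2 hv)

theorem ncard_faces_del_lt (hk : {k} ∈ Δ.faces) : (Δ.del k).faces.ncard < Δ.faces.ncard :=
  Set.ncard_lt_ncard <| (Set.ssubset_iff_of_subset fun _ hF => hF.1).2
    ⟨{k}, hk, fun h => h.2 (Finset.mem_singleton_self k)⟩

theorem ncard_faces_link_lt (hk : {k} ∈ Δ.faces) : (Δ.link k).faces.ncard < Δ.faces.ncard :=
  Set.ncard_lt_ncard <| (Set.ssubset_iff_of_subset fun _ hF => hF.2.1).2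
    ⟨{k}, hk, fun h => h.1 (Finset.mem_singleton_self k)⟩

end SComplex

/-- every matroid complex is vertex-decomposable. -/
theorem matroid_vertexDecomposable {n : ℕ} (Δ : SComplex n)
    (hmat : Δ.IsMatroid) (hne : ∅ ∈ Δ.faces) :
    SComplex.VertexDecomposable Δ := by
  induction hN : Δ.faces.ncard using Nat.strong_induction_on generalizing Δ with
  | _ N ih =>
    obtain ⟨H, hH, -⟩ := SComplex.exists_isFacet_superset hne
    by_cases hvert : ∀ k, {k} ∈ Δ.faces → k ∈ H
    · exact .simplex Δ (SComplex.isSimplex_of_forall_mem_isFacet hH hvert)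
    push Not at hvert
    obtain ⟨k, hk, hkH⟩ := hvert
    have hp := hmat.pure
    exact .step Δ k (hp.link k) (hmat.del k).pure
      (ih _ (hN ▸ SComplex.ncard_faces_link_lt hk) _ (hmat.link k)
        ⟨Finset.notMem_empty k, hne, by simpa using hk⟩ rfl)
      (ih _ (hN ▸ SComplex.ncard_faces_del_lt hk) _ (hmat.del k)
        ⟨hne, Finset.notMem_empty k⟩ rfl)
      (hp.dimSucc_del hH hkH).symm (hp.dimSucc_link_add_one hk).symm
end

section
/- Every pure shifted simplicial complex that is Cohen–Macaulay is vertex-decomposable. (In fact, every pure shifted complex is vertex-decomposable.) -/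
set_option synthInstance.maxHeartbeats 1000000
set_option maxHeartbeats 1000000
open MvPolynomial

-- ===== auxiliary development =====
namespace SCAux

open SComplex Finset

variable {n : ℕ}

lemma card_le_dimSucc (Δ : SComplex n) {F : Finset (Fin n)} (hF : F ∈ Δ.faces) :
    F.card ≤ Δ.dimSucc := by
  apply le_csSup
  · exact ⟨n, by rintro d ⟨G, hG, rfl⟩; simpa using Finset.card_le_univ G⟩
  · exact ⟨F, hF, rfl⟩

lemma dimSucc_le (Δ : SComplex n) {m : ℕ} (hne : ∅ ∈ Δ.faces)
    (h : ∀ F ∈ Δ.faces, F.card ≤ m) : Δ.dimSucc ≤ m := by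
  refine csSup_le ?_ ?_
  · exact ⟨0, ⟨∅, hne, rfl⟩⟩
  · rintro d ⟨G, hG, rfl⟩
    exact h G hG

lemma exists_facet_above (Δ : SComplex n) (F : Finset (Fin n)) (hF : F ∈ Δ.faces) :
    ∃ G, Δ.IsFacet G ∧ F ⊆ G := by
  have key : ∀ m (F : Finset (Fin n)), n ≤ F.card + m → F ∈ Δ.faces →
      ∃ G, Δ.IsFacet G ∧ F ⊆ G := by
    intro m
    induction m with
    | zero =>
      intro F hFc hF
      refine ⟨F, ⟨hF, fun H hH hFH => ?_⟩, subset_rfl⟩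
      refine (Finset.eq_of_subset_of_card_le hFH ?_).symm
      calc H.card ≤ n := by simpa using Finset.card_le_univ H
        _ ≤ F.card := by omega
    | succ m ih =>
      intro F hFc hF
      by_cases hfac : ∀ H ∈ Δ.faces, F ⊆ H → H = F
      · exact ⟨F, ⟨hF, hfac⟩, subset_rfl⟩
      · push_neg at hfac
        obtain ⟨H, hH, hFH, hne⟩ := hfac
        have hlt : F.card < H.card := Finset.card_lt_card (lt_of_le_of_ne hFH (fun h => hne h.symm))
        obtain ⟨G, hG, hHG⟩ := ih H (by omega) hH
        exact ⟨G, hG, hFH.trans hHG⟩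
  exact key n F (by omega) hF

lemma facet_card (Δ : SComplex n) (hpure : Δ.Pure) (hne : ∅ ∈ Δ.faces)
    {G : Finset (Fin n)} (hG : Δ.IsFacet G) : G.card = Δ.dimSucc := by
  have hbdd : BddAbove {d | ∃ F ∈ Δ.faces, F.card = d} :=
    ⟨n, by rintro d ⟨F, hF, rfl⟩; simpa using Finset.card_le_univ F⟩
  have hmem : Δ.dimSucc ∈ {d | ∃ F ∈ Δ.faces, F.card = d} :=
    Nat.sSup_mem ⟨0, ⟨∅, hne, rfl⟩⟩ hbdd
  obtain ⟨F, hF, hFc⟩ := hmem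
  obtain ⟨G₁, hG₁, hFG₁⟩ := exists_facet_above Δ F hF
  have h1 : G₁.card = Δ.dimSucc := by
    have h2 := card_le_dimSucc Δ hG₁.1
    have h3 : F.card ≤ G₁.card := Finset.card_le_card hFG₁
    omega
  rw [hpure G G₁ hG hG₁, h1]

lemma faces_eq_singleton (Δ : SComplex n) {c : ℕ} (hnc : n ≤ c) (hne : ∅ ∈ Δ.faces)
    (hsupp : ∀ F ∈ Δ.faces, ∀ v ∈ F, c ≤ v.val) : Δ.faces = {∅} := by
  ext F
  simp only [Set.mem_singleton_iff]
  constructor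
  · intro hF
    rw [Finset.eq_empty_iff_forall_notMem]
    intro v hv
    have h1 := hsupp F hF v hv
    have h2 := v.isLt
    omega
  · rintro rfl; exact hne

lemma vd_aux : ∀ (t : ℕ) {n : ℕ} (c : ℕ), n ≤ c + t → ∀ (Δ : SComplex n),
    Δ.Pure → Δ.IsShifted → ∅ ∈ Δ.faces →
    (∀ F ∈ Δ.faces, ∀ v ∈ F, c ≤ v.val) → VertexDecomposable Δ := by
  intro t
  induction t with
  | zero =>
    intro n c hnc Δ hpure hsh hne hsupp
    exact VertexDecomposable.singleton Δ (faces_eq_singleton Δ (by omega) hne hsupp)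
  | succ t ih =>
    intro n c hnc Δ hpure hsh hne hsupp
    by_cases hcn : n ≤ c
    · exact VertexDecomposable.singleton Δ (faces_eq_singleton Δ hcn hne hsupp)
    · push_neg at hcn
      set k : Fin n := ⟨c, hcn⟩ with hk_def
      by_cases hk : {k} ∈ Δ.faces
      · -- k is the minimal vertex present
        have hmin : ∀ F ∈ Δ.faces, ∀ v ∈ F, v ≠ k → k < v := by
          intro F hF v hv hvk
          have h1 := hsupp F hF v hv
          have h2 : v.val ≠ c := fun h => hvk (Fin.ext h)
          exact Fin.lt_def.mpr (by simp [hk_def]; omega)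
        obtain ⟨G, hGfacet, hkG⟩ := exists_facet_above Δ {k} hk
        have hkG' : k ∈ G := hkG (Finset.mem_singleton_self k)
        have hGcard : G.card = Δ.dimSucc := facet_card Δ hpure hne hGfacet
        have hd1 : 1 ≤ Δ.dimSucc := hGcard ▸ Finset.card_pos.mpr ⟨k, hkG'⟩
        by_cases hcov : ∀ i : Fin n, k < i → i ∈ G
        · -- Δ is the simplex on G
          apply VertexDecomposable.simplex
          refine ⟨G, ?_⟩
          ext H
          constructor
          · intro hH v hv
            rcases eq_or_ne v k with rfl | hvk
            · exact hkG'
            · exact hcov v (hmin H hH v hv hvk)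
          · intro hH
            exact Δ.down_closed hGfacet.1 hH
        · push_neg at hcov
          obtain ⟨i0, hki0, hi0G⟩ := hcov
          have hG'mem : insert i0 (G.erase k) ∈ Δ.faces :=
            hsh G hGfacet.1 k hkG' i0 hki0 hi0G
          set G' := insert i0 (G.erase k) with hG'def
          have hkG'' : k ∉ G' := by
            simp only [hG'def, Finset.mem_insert, Finset.mem_erase, not_or]
            exact ⟨hki0.ne, fun h => h.1 rfl⟩
          have hi0e : i0 ∉ G.erase k := fun h => hi0G (Finset.mem_of_mem_erase h)
          have hG'card : G'.card = Δ.dimSucc := by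
            rw [hG'def, Finset.card_insert_of_notMem hi0e, Finset.card_erase_of_mem hkG']
            omega
          -- link facts
          have hlinkne : ∅ ∈ (Δ.link k).faces :=
            ⟨Finset.notMem_empty k, hne, by simpa using hk⟩
          have hlink_facet_card : ∀ H, (Δ.link k).IsFacet H → H.card + 1 = Δ.dimSucc := by
            rintro H ⟨⟨hkH, hHΔ, hinsH⟩, hmax⟩
            obtain ⟨G₂, hG₂facet, hsub⟩ := exists_facet_above Δ _ hinsH
            have hkG₂ : k ∈ G₂ := hsub (Finset.mem_insert_self k H)
            have h1 : G₂.erase k ∈ (Δ.link k).faces := by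
              refine ⟨Finset.notMem_erase k G₂, Δ.down_closed hG₂facet.1 (Finset.erase_subset k G₂), ?_⟩
              rw [Finset.insert_erase hkG₂]
              exact hG₂facet.1
            have h2 : H ⊆ G₂.erase k :=
              Finset.subset_erase.mpr ⟨(Finset.subset_insert k H).trans hsub, hkH⟩
            have h3 : G₂.erase k = H := hmax _ h1 h2
            have h4 : G₂.card = Δ.dimSucc := facet_card Δ hpure hne hG₂facet
            have h5 : (G₂.erase k).card = G₂.card - 1 := Finset.card_erase_of_mem hkG₂
            have h6 : 1 ≤ G₂.card := Finset.card_pos.mpr ⟨k, hkG₂⟩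
            rw [← h3, h5]
            omega
          have hpl : (Δ.link k).Pure := by
            intro A B hA hB
            have hA' := hlink_facet_card A hA
            have hB' := hlink_facet_card B hB
            omega
          have hlinkdim : Δ.dimSucc = (Δ.link k).dimSucc + 1 := by
            have hup : (Δ.link k).dimSucc ≤ Δ.dimSucc - 1 := by
              refine dimSucc_le _ hlinkne ?_
              intro F hF
              have h1 : (insert k F).card ≤ Δ.dimSucc := card_le_dimSucc Δ hF.2.2
              rw [Finset.card_insert_of_notMem hF.1] at h1
              omega
            have hGe : G.erase k ∈ (Δ.link k).faces := by
              refine ⟨Finset.notMem_erase k G, Δ.down_closed hGfacet.1 (Finset.erase_subset k G), ?_⟩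
              rw [Finset.insert_erase hkG']
              exact hGfacet.1
            have hdown := card_le_dimSucc _ hGe
            rw [Finset.card_erase_of_mem hkG', hGcard] at hdown
            omega
          -- del facts
          have hdelne : ∅ ∈ (Δ.del k).faces := ⟨hne, Finset.notMem_empty k⟩
          have hdeldim : Δ.dimSucc = (Δ.del k).dimSucc := by
            refine le_antisymm (hG'card ▸ card_le_dimSucc _ ⟨hG'mem, hkG''⟩) ?_
            exact dimSucc_le _ hdelne fun F hF => card_le_dimSucc Δ hF.1
          have hdel_facet_card : ∀ H, (Δ.del k).IsFacet H → H.card = Δ.dimSucc := by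
            rintro H ⟨⟨hHΔ, hkH⟩, hmax⟩
            obtain ⟨G₂, hG₂f, hsub⟩ := exists_facet_above Δ H hHΔ
            have hG₂card : G₂.card = Δ.dimSucc := facet_card Δ hpure hne hG₂f
            by_cases hkG₂ : k ∈ G₂
            · have hex : ∃ i, k < i ∧ i ∉ G₂ := by
                by_contra hcon
                push_neg at hcon
                have hsub2 : G' ⊆ G₂ := by
                  intro v hv
                  exact hcon v (hmin G' hG'mem v hv (fun h => hkG'' (h ▸ hv)))
                have heq : G' = G₂ :=
                  Finset.eq_of_subset_of_card_le hsub2 (by omega)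
                exact hkG'' (heq ▸ hkG₂)
              obtain ⟨i1, hki1, hi1⟩ := hex
              have hH'mem : insert i1 (G₂.erase k) ∈ Δ.faces :=
                hsh G₂ hG₂f.1 k hkG₂ i1 hki1 hi1
              have hkH' : k ∉ insert i1 (G₂.erase k) := by
                simp only [Finset.mem_insert, Finset.mem_erase, not_or]
                exact ⟨hki1.ne, fun h => h.1 rfl⟩
              have hsub' : H ⊆ insert i1 (G₂.erase k) :=
                (Finset.subset_erase.mpr ⟨hsub, hkH⟩).trans (Finset.subset_insert _ _)
              have heq := hmax _ ⟨hH'mem, hkH'⟩ hsub'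
              have hi1e : i1 ∉ G₂.erase k := fun h => hi1 (Finset.mem_of_mem_erase h)
              have hc1 : (insert i1 (G₂.erase k)).card = G₂.card := by
                rw [Finset.card_insert_of_notMem hi1e, Finset.card_erase_of_mem hkG₂]
                have : 1 ≤ G₂.card := Finset.card_pos.mpr ⟨k, hkG₂⟩
                omega
              rw [← heq, hc1, hG₂card]
            · have heq := hmax G₂ ⟨hG₂f.1, hkG₂⟩ hsub
              rw [← heq, hG₂card]
          have hpd : (Δ.del k).Pure := by
            intro A B hA hB
            rw [hdel_facet_card A hA, hdel_facet_card B hB]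
          -- shiftedness of link and del
          have hshd : (Δ.del k).IsShifted := by
            rintro F ⟨hFΔ, hkF⟩ j hj i hji hiF
            refine ⟨hsh F hFΔ j hj i hji hiF, ?_⟩
            have hkj : k < j := hmin F hFΔ j hj (fun h => hkF (h ▸ hj))
            simp only [Finset.mem_insert, Finset.mem_erase, not_or]
            exact ⟨(hkj.trans hji).ne, fun h => hkF h.2⟩
          have hshl : (Δ.link k).IsShifted := by
            rintro F ⟨hkF, hFΔ, hins⟩ j hj i hji hiF
            have hkj : k < j := hmin F hFΔ j hj (fun h => hkF (h ▸ hj))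
            have hik : i ≠ k := fun h => absurd (h ▸ (hkj.trans hji)) (lt_irrefl k)
            have hjk : j ≠ k := fun h => absurd (h ▸ hkj) (lt_irrefl k)
            refine ⟨?_, hsh F hFΔ j hj i hji hiF, ?_⟩
            · simp only [Finset.mem_insert, Finset.mem_erase, not_or]
              exact ⟨(hkj.trans hji).ne, fun h => hkF h.2⟩
            · have h1 : insert i ((insert k F).erase j) ∈ Δ.faces := by
                refine hsh (insert k F) hins j (Finset.mem_insert_of_mem hj) i hji ?_
                simp only [Finset.mem_insert]
                push_neg
                exact ⟨hik, hiF⟩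
              rw [Finset.erase_insert_of_ne hjk.symm] at h1
              rwa [Finset.insert_comm] at h1
          -- supports
          have hsuppd : ∀ F ∈ (Δ.del k).faces, ∀ v ∈ F, c + 1 ≤ v.val := by
            rintro F ⟨hFΔ, hkF⟩ v hv
            have h1 := hmin F hFΔ v hv (fun h => hkF (h ▸ hv))
            have h2 : c < (v : ℕ) := Fin.lt_def.mp h1
            omega
          have hsuppl : ∀ F ∈ (Δ.link k).faces, ∀ v ∈ F, c + 1 ≤ v.val := by
            rintro F ⟨hkF, hFΔ, _⟩ v hv
            have h1 := hmin F hFΔ v hv (fun h => hkF (h ▸ hv))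
            have h2 : c < (v : ℕ) := Fin.lt_def.mp h1
            omega
          have vdl := ih (c + 1) (by omega) (Δ.link k) hpl hshl hlinkne hsuppl
          have vdd := ih (c + 1) (by omega) (Δ.del k) hpd hshd hdelne hsuppd
          exact VertexDecomposable.step Δ k hpl hpd vdl vdd hdeldim hlinkdim
      · -- k not present: all vertices are ≥ c+1
        refine ih (c + 1) (by omega) Δ hpure hsh hne ?_
        intro F hF v hv
        have h1 := hsupp F hF v hv
        rcases Nat.lt_or_ge c v.val with h | h
        · omega
        · exfalso
          have hvk : v = k := Fin.ext (show (v : ℕ) = c by omega)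
          exact hk (Δ.down_closed hF (by rw [← hvk]; simp [Finset.singleton_subset_iff, hv]))

end SCAux

/-- every pure shifted simplicial complex is vertex-decomposable
(in particular every pure shifted Cohen–Macaulay complex is). -/
theorem shifted_vertexDecomposable {n : ℕ} (Δ : SComplex n)
    (hpure : Δ.Pure) (hshift : Δ.IsShifted) (hne : ∅ ∈ Δ.faces) :
    SComplex.VertexDecomposable Δ := by
  exact SCAux.vd_aux n 0 (by omega) Δ hpure hshift hne (fun _ _ v _ => Nat.zero_le _)
end

section
/- Let c ⊆ J ⊂ S be homogeneous ideals with S/c Cohen–Macaulay, J unmixed, codim J = codim c + 1, and let x ∈ S be a linear form that is a nonzerodivisor on S/c and on S/J. Then (xJ + c) : x = J. -/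
set_option synthInstance.maxHeartbeats 1000000
set_option maxHeartbeats 1000000
open MvPolynomial

/-- An ideal generated by homogeneous polynomials. -/
def IsHomogeneousIdeal (K : Type*) [Field K] {n : ℕ}
    (I : Ideal (MvPolynomial (Fin n) K)) : Prop :=
  ∃ G : Set (MvPolynomial (Fin n) K),
    (∀ p ∈ G, ∃ d : ℕ, p.IsHomogeneous d) ∧ I = Ideal.span G

namespace Ideal

variable {R : Type*} [CommRing R] {I J : Ideal R} {x : R}

theorem le_colon_span_singleton_of_span_singleton_mul_le (h : span {x} * J ≤ I) :
    J ≤ I.colon (span {x}) := fun r hr =>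
  mem_colon_span_singleton.mpr <| h <| mul_comm x r ▸ mul_mem_mul (mem_span_singleton_self x) hr

theorem colon_span_singleton_le_of_le (hIJ : I ≤ J)
    (hx : Quotient.mk J x ∈ nonZeroDivisors (R ⧸ J)) : I.colon (span {x}) ≤ J := by
  intro r hr
  have hrx : Quotient.mk J r * Quotient.mk J x = 0 := by
    rw [← map_mul, Quotient.eq_zero_iff_mem]
    exact hIJ (mem_colon_span_singleton.mp hr)
  exact Quotient.eq_zero_iff_mem.mp (mem_nonZeroDivisors_iff_right.mp hx _ hrx)

theorem colon_span_singleton_eq_of_span_singleton_mul_le_of_le (hxJ : span {x} * J ≤ I)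
    (hIJ : I ≤ J) (hx : Quotient.mk J x ∈ nonZeroDivisors (R ⧸ J)) :
    I.colon (span {x}) = J :=
  (colon_span_singleton_le_of_le hIJ hx).antisymm
    (le_colon_span_singleton_of_span_singleton_mul_le hxJ)

end Ideal

theorem basic_double_link_colon_general (K : Type*) [Field K] {n : ℕ}
    (c J : Ideal (MvPolynomial (Fin n) K)) (x : MvPolynomial (Fin n) K)
    (hcJ : c ≤ J)
    (hxJ : Ideal.Quotient.mk J x ∈ nonZeroDivisors (MvPolynomial (Fin n) K ⧸ J)) :
    Submodule.colon (Ideal.span {x} * J + c) (Ideal.span {x}) = J :=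
  Ideal.colon_span_singleton_eq_of_span_singleton_mul_le_of_le le_sup_left
    (sup_le Ideal.mul_le_right hcJ) hxJ

/-- the colon computation underlying basic double linkage:
`(xJ + c) : x = J`. -/
theorem basic_double_link_colon (K : Type*) [Field K] {n : ℕ}
    (c J : Ideal (MvPolynomial (Fin n) K)) (x : MvPolynomial (Fin n) K)
    (hchom : IsHomogeneousIdeal K c) (hJhom : IsHomogeneousIdeal K J)
    (hcJ : c ≤ J) (hcCM : IsCMQuot K c) (hJun : UnmixedIdeal K J)
    (hcod : idealHeight K J = idealHeight K c + 1)
    (hx : x.IsHomogeneous 1)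
    (hxc : Ideal.Quotient.mk c x ∈ nonZeroDivisors (MvPolynomial (Fin n) K ⧸ c))
    (hxJ : Ideal.Quotient.mk J x ∈ nonZeroDivisors (MvPolynomial (Fin n) K ⧸ J)) :
    Submodule.colon (Ideal.span {x} * J + c) (Ideal.span {x}) = J :=
  basic_double_link_colon_general K c J x hcJ hxJ
end
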